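/- Suppose a distribution shift from a source joint distribution P_s(X,Y) to a target joint distribution P_t(X,Y) is ε-approximate label-preserving with respect to a measurable transformation T (meaning P_t(X) is the pushforward of P_s(X) under T, and for every x_s the total variation distance between P_t(Y | T(x_s)) and P_s(Y | x_s) is at most ε). Let L be a loss function with ‖L‖_∞ ≤ 1, let f be any measurable model, define the true target loss L_t = E_{P_t(X,Y)}[L(f(X), Y)] and the transport-estimated loss L̂_t = E_{P_s(X,Y)}[L(f(T(X)), Y)]. Then |L_t − L̂_t| ≤ 2ε. -/

import Mathlib

/-!
Disintegrating both joint laws and pulling the target marginal back along `T`, both losses become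
integrals over `μs` of inner integrals against `κt (T x)` and `κs x`. These inner integrals differ
by at most `2ε`: on each half of a Hahn decomposition for the pair `(κt (T x), κs x)` one measure
dominates the other, so there the difference of integrals of a `1`-bounded function is at most the
difference of masses, which is at most `ε`.
-/

open MeasureTheory ProbabilityTheory

section

variable {Y : Type*} [MeasurableSpace Y] {ν₁ ν₂ : Measure Y} [IsFiniteMeasure ν₁]
  [IsFiniteMeasure ν₂] {g : Y → ℝ} {C : ℝ}

lemma abs_integral_sub_integral_le_of_le (hg : Measurable g) (hgC : ∀ y, |g y| ≤ C)
    (hle : ν₂ ≤ ν₁) :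
    |∫ y, g y ∂ν₁ - ∫ y, g y ∂ν₂| ≤ C * (ν₁.real Set.univ - ν₂.real Set.univ) := by
  have hgC' : ∀ᵐ y ∂(ν₁ - ν₂), ‖g y‖ ≤ C := ae_of_all _ hgC
  have hsplit : ∫ y, g y ∂ν₁ = ∫ y, g y ∂(ν₁ - ν₂) + ∫ y, g y ∂ν₂ := by
    rw [← integral_add_measure (.of_bound hg.aestronglyMeasurable C hgC')
      (.of_bound hg.aestronglyMeasurable C (ae_of_all _ hgC)), Measure.sub_add_cancel_of_le hle]
  have hmass : (ν₁ - ν₂).real Set.univ = ν₁.real Set.univ - ν₂.real Set.univ := by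
    rw [measureReal_def, Measure.sub_apply .univ hle,
      ENNReal.toReal_sub_of_le (hle _) (measure_ne_top _ _), measureReal_def, measureReal_def]
  rw [hsplit, add_sub_cancel_right, ← hmass]
  exact norm_integral_le_of_norm_le_const hgC'

lemma abs_integral_sub_integral_le_of_forall_abs_measureReal_sub_le (hg : Measurable g)
    (hC : 0 ≤ C) (hgC : ∀ y, |g y| ≤ C) {ε : ℝ}
    (hν : ∀ A, MeasurableSet A → |ν₁.real A - ν₂.real A| ≤ ε) :
    |∫ y, g y ∂ν₁ - ∫ y, g y ∂ν₂| ≤ 2 * C * ε := by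
  obtain ⟨S, hS, hS₁, hS₂⟩ := hahn_decomposition ν₁ ν₂
  have hle : ν₂.restrict S ≤ ν₁.restrict S := by
    refine Measure.le_iff.mpr fun s hs => ?_
    rw [Measure.restrict_apply hs, Measure.restrict_apply hs]
    exact hS₁ _ (hs.inter hS) Set.inter_subset_right
  have hle' : ν₁.restrict Sᶜ ≤ ν₂.restrict Sᶜ := by
    refine Measure.le_iff.mpr fun s hs => ?_
    rw [Measure.restrict_apply hs, Measure.restrict_apply hs]
    exact hS₂ _ (hs.inter hS.compl) Set.inter_subset_right
  have hsplit : ∀ (ν : Measure Y) [IsFiniteMeasure ν],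
      ∫ y, g y ∂ν = ∫ y, g y ∂(ν.restrict S) + ∫ y, g y ∂(ν.restrict Sᶜ) := fun ν _ => by
    rw [← integral_add_measure (.of_bound hg.aestronglyMeasurable C (ae_of_all _ hgC))
      (.of_bound hg.aestronglyMeasurable C (ae_of_all _ hgC)),
      Measure.restrict_add_restrict_compl hS]
  have hon := abs_integral_sub_integral_le_of_le hg hgC hle
  have hoff := abs_integral_sub_integral_le_of_le hg hgC hle'
  simp only [measureReal_restrict_apply_univ] at hon hoff
  have hεS := (le_abs_self _).trans (hν S hS)
  have hεSc := (le_abs_self _).trans ((abs_sub_comm _ _).trans_le (hν Sᶜ hS.compl))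
  calc |∫ y, g y ∂ν₁ - ∫ y, g y ∂ν₂|
      = |(∫ y, g y ∂(ν₁.restrict S) - ∫ y, g y ∂(ν₂.restrict S)) -
          (∫ y, g y ∂(ν₂.restrict Sᶜ) - ∫ y, g y ∂(ν₁.restrict Sᶜ))| := by
        rw [hsplit ν₁, hsplit ν₂]; ring_nf
    _ ≤ |∫ y, g y ∂(ν₁.restrict S) - ∫ y, g y ∂(ν₂.restrict S)| +
          |∫ y, g y ∂(ν₂.restrict Sᶜ) - ∫ y, g y ∂(ν₁.restrict Sᶜ)| := abs_sub _ _
    _ ≤ C * ε + C * ε := add_le_add (hon.trans (mul_le_mul_of_nonneg_left hεS hC))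
          (hoff.trans (mul_le_mul_of_nonneg_left hεSc hC))
    _ = 2 * C * ε := by ring

end

lemma abs_integral_compProd_sub_integral_compProd_le {X Y : Type*} [MeasurableSpace X]
    [MeasurableSpace Y] {μ : Measure X} [IsFiniteMeasure μ] {κ η : Kernel X Y}
    [IsMarkovKernel κ] [IsMarkovKernel η] {G : X × Y → ℝ} (hG : Measurable G) {C ε : ℝ}
    (hC : 0 ≤ C) (hGC : ∀ p, |G p| ≤ C)
    (hκη : ∀ x A, MeasurableSet A → |(κ x).real A - (η x).real A| ≤ ε) :
    |∫ p, G p ∂(μ ⊗ₘ κ) - ∫ p, G p ∂(μ ⊗ₘ η)| ≤ 2 * C * ε * μ.real Set.univ := by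
  have hG_int : ∀ (ρ : Kernel X Y) [IsMarkovKernel ρ], Integrable G (μ ⊗ₘ ρ) := fun ρ _ =>
    .of_bound hG.aestronglyMeasurable C (ae_of_all _ hGC)
  have hinner_int : ∀ (ρ : Kernel X Y) [IsMarkovKernel ρ],
      Integrable (fun x => ∫ y, G (x, y) ∂ρ x) μ := fun ρ _ =>
    .of_bound hG.stronglyMeasurable.integral_kernel_prod_right'.aestronglyMeasurable C
      (ae_of_all _ fun x => by
        simpa using norm_integral_le_of_norm_le_const (μ := ρ x) (f := fun y => G (x, y))
          (ae_of_all _ fun y => hGC (x, y)))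
  rw [Measure.integral_compProd (hG_int κ), Measure.integral_compProd (hG_int η),
    ← integral_sub (hinner_int κ) (hinner_int η)]
  exact norm_integral_le_of_norm_le_const
    (f := fun x => ∫ y, G (x, y) ∂κ x - ∫ y, G (x, y) ∂η x) (ae_of_all _ fun x =>
    abs_integral_sub_integral_le_of_forall_abs_measureReal_sub_le (hG.comp measurable_prodMk_left)
      hC (fun y => hGC (x, y)) (hκη x))

lemma map_compProd_eq_map_compProd_comap {X X' Y : Type*} [MeasurableSpace X]
    [MeasurableSpace X'] [MeasurableSpace Y] (μ : Measure X) [SFinite μ] (κ : Kernel X' Y)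
    [IsSFiniteKernel κ] {T : X → X'} (hT : Measurable T) :
    μ.map T ⊗ₘ κ = (μ ⊗ₘ κ.comap T hT).map (Prod.map T id) := by
  ext s hs
  rw [Measure.map_apply (hT.prodMap measurable_id) hs,
    Measure.compProd_apply (hs.preimage (hT.prodMap measurable_id)), Measure.compProd_apply hs,
    lintegral_map (Kernel.measurable_kernel_prodMk_left hs) hT]
  rfl

theorem performance_estimation_error_le_general {Xs Xt Y Z : Type*}
    [MeasurableSpace Xs] [MeasurableSpace Xt] [MeasurableSpace Y] [MeasurableSpace Z]
    (μs : Measure Xs) (μt : Measure Xt)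
    [IsProbabilityMeasure μs]
    (κs : Kernel Xs Y) (κt : Kernel Xt Y) [IsMarkovKernel κs] [IsMarkovKernel κt]
    (T : Xs → Xt) (hT : Measurable T) (hpush : μs.map T = μt)
    (f : Xt → Z) (hf : Measurable f)
    (L : Z → Y → ℝ) (hL : Measurable (Function.uncurry L))
    (hLbound : ∀ z y, |L z y| ≤ 1)
    (ε : ℝ)
    (hlabel : ∀ x : Xs, ∀ A : Set Y, MeasurableSet A →
      |(κt (T x) A).toReal - (κs x A).toReal| ≤ ε) :
    |(∫ p, L (f p.1) p.2 ∂(μt.compProd κt)) -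
      (∫ p, L (f (T p.1)) p.2 ∂(μs.compProd κs))| ≤ 2 * ε := by
  have hloss : Measurable fun p : Xt × Y => L (f p.1) p.2 :=
    hL.comp ((hf.comp measurable_fst).prodMk measurable_snd)
  rw [← hpush, map_compProd_eq_map_compProd_comap μs κt hT,
    integral_map (hT.prodMap measurable_id).aemeasurable hloss.aestronglyMeasurable]
  simpa using abs_integral_compProd_sub_integral_compProd_le (μ := μs) (κ := κt.comap T hT)
    (η := κs) (hloss.comp (hT.prodMap measurable_id)) zero_le_one (fun p => hLbound _ _) hlabel

/-- If a distribution shift is ε-approximate label-preserving with respect to a measurable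
transformation `T`, the transport-estimated loss is within `2ε` of the true target loss. -/
theorem performance_estimation_error_le {Xs Xt Y Z : Type*}
    [MeasurableSpace Xs] [MeasurableSpace Xt] [MeasurableSpace Y] [MeasurableSpace Z]
    (μs : Measure Xs) (μt : Measure Xt)
    [IsProbabilityMeasure μs] [IsProbabilityMeasure μt]
    (κs : Kernel Xs Y) (κt : Kernel Xt Y) [IsMarkovKernel κs] [IsMarkovKernel κt]
    (T : Xs → Xt) (hT : Measurable T) (hpush : μs.map T = μt)
    (f : Xt → Z) (hf : Measurable f)
    (L : Z → Y → ℝ) (hL : Measurable (Function.uncurry L))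
    (hLbound : ∀ z y, |L z y| ≤ 1)
    (ε : ℝ) (hε : 0 ≤ ε)
    (hlabel : ∀ x : Xs, ∀ A : Set Y, MeasurableSet A →
      |(κt (T x) A).toReal - (κs x A).toReal| ≤ ε) :
    |(∫ p, L (f p.1) p.2 ∂(μt.compProd κt)) -
      (∫ p, L (f (T p.1)) p.2 ∂(μs.compProd κs))| ≤ 2 * ε :=
  performance_estimation_error_le_general μs μt κs κt T hT hpush f hf L hL hLbound ε hlabel
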